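/- arXiv:2503.12176 — 2 statements merged into one kernel-verified Lean document; each statement's English description precedes it below -/
import Mathlib

section
/- (Theorem 3.3(i)) Let the sequences (xᵏ, yᵏ, uᵏ, θ_k) be generated by the FPSA iteration, and let 0 < m ≤ f(Kxᵏ) ≤ M for all k. Then θ_{k+1} ≤ θ_k − (ϱ₁/M)‖xᵏ − xᵏ⁺¹‖² − (ϱ₂/M)‖uᵏ − uᵏ⁺¹‖² for all k; consequently (θ_k) is nonincreasing and converges to some limit θ̄ ≥ 0, and ‖xᵏ − xᵏ⁺¹‖ → 0 and ‖uᵏ − uᵏ⁺¹‖ → 0 as k → ∞. -/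
open Filter Metric Set RealInnerProductSpace
open scoped Topology Classical

noncomputable section

/-- Convexity for extended-real-valued functions. -/
def ERealConvex {α : Type*} [AddCommGroup α] [Module ℝ α] (f : α → EReal) : Prop :=
  ∀ x y : α, ∀ a b : ℝ, 0 ≤ a → 0 ≤ b → a + b = 1 →
    f (a • x + b • y) ≤ (a : EReal) * f x + (b : EReal) * f y

/-- A proper extended-real-valued function: never `⊥` and finite somewhere. -/
def ERealProper {α : Type*} (f : α → EReal) : Prop :=
  (∀ x, f x ≠ ⊥) ∧ ∃ x, f x ≠ ⊤

/-- Effective domain of an extended-real-valued function. -/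
def edom {α : Type*} (f : α → EReal) : Set α := {x | f x ≠ ⊤}

/-- Convex (Fenchel) conjugate. -/
def econj {α : Type*} [NormedAddCommGroup α] [InnerProductSpace ℝ α]
    (f : α → EReal) (y : α) : EReal :=
  ⨆ z, (((⟪z, y⟫ : ℝ) : EReal) - f z)

/-- Convex subdifferential. -/
def csubdiff {α : Type*} [NormedAddCommGroup α] [InnerProductSpace ℝ α]
    (f : α → EReal) (z : α) : Set α :=
  {v | ∀ w, f z + ((⟪v, w - z⟫ : ℝ) : EReal) ≤ f w}

/-- Normal cone of a convex set. -/
def normalCone {α : Type*} [NormedAddCommGroup α] [InnerProductSpace ℝ α]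
    (S : Set α) (x : α) : Set α :=
  {v | ∀ z ∈ S, ⟪v, z - x⟫ ≤ 0}

/-- Calmness of an extended-real-valued function at a point of its domain. -/
def ECalm {α : Type*} [NormedAddCommGroup α] (f : α → EReal) (y : α) : Prop :=
  f y ≠ ⊤ ∧ ∃ ϱ > (0:ℝ), ∃ ε > (0:ℝ), ∀ y' ∈ Metric.ball y ε,
    f y - ((ϱ * ‖y' - y‖ : ℝ) : EReal) ≤ f y' ∧ f y' ≤ f y + ((ϱ * ‖y' - y‖ : ℝ) : EReal)

/-- Fréchet subdifferential of an extended-real-valued function of one variable. -/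
def fsub {α : Type*} [NormedAddCommGroup α] [InnerProductSpace ℝ α]
    (f : α → EReal) (x : α) : Set α :=
  {v | 0 ≤ Filter.liminf
      (fun z => (f z - f x - ((⟪v, z - x⟫ : ℝ) : EReal)) * (((‖z - x‖)⁻¹ : ℝ) : EReal))
      (𝓝[≠] x)}

/-- Fréchet subdifferential of a function of two (inner-product-space) variables. -/
def fsub2 {α β : Type*} [NormedAddCommGroup α] [InnerProductSpace ℝ α]
    [NormedAddCommGroup β] [InnerProductSpace ℝ β]
    (Φ : α → β → EReal) (a : α) (b : β) : Set (α × β) :=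
  {v | 0 ≤ Filter.liminf
      (fun w : α × β =>
        (Φ w.1 w.2 - Φ a b - ((⟪v.1, w.1 - a⟫ + ⟪v.2, w.2 - b⟫ : ℝ) : EReal)) *
          (((‖w - (a, b)‖)⁻¹ : ℝ) : EReal))
      (𝓝[≠] (a, b))}

/-- Limiting (Mordukhovich) subdifferential of a function of two variables. -/
def lsub2 {α β : Type*} [NormedAddCommGroup α] [InnerProductSpace ℝ α]
    [NormedAddCommGroup β] [InnerProductSpace ℝ β]
    (Φ : α → β → EReal) (a : α) (b : β) : Set (α × β) :=
  {v | ∃ w : ℕ → α × β, ∃ vs : ℕ → α × β,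
      Tendsto w atTop (𝓝 (a, b)) ∧
      Tendsto (fun k => Φ (w k).1 (w k).2) atTop (𝓝 (Φ a b)) ∧
      (∀ k, vs k ∈ fsub2 Φ (w k).1 (w k).2) ∧
      Tendsto vs atTop (𝓝 v)}

/-- Fréchet subdifferential of a function of three variables. -/
def fsub3 {α β γ : Type*} [NormedAddCommGroup α] [InnerProductSpace ℝ α]
    [NormedAddCommGroup β] [InnerProductSpace ℝ β]
    [NormedAddCommGroup γ] [InnerProductSpace ℝ γ]
    (Φ : α → β → γ → EReal) (a : α) (b : β) (c : γ) : Set (α × β × γ) :=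
  {v | 0 ≤ Filter.liminf
      (fun w : α × β × γ =>
        (Φ w.1 w.2.1 w.2.2 - Φ a b c -
          ((⟪v.1, w.1 - a⟫ + ⟪v.2.1, w.2.1 - b⟫ + ⟪v.2.2, w.2.2 - c⟫ : ℝ) : EReal)) *
          (((‖w - (a, b, c)‖)⁻¹ : ℝ) : EReal))
      (𝓝[≠] (a, b, c))}

/-- Limiting (Mordukhovich) subdifferential of a function of three variables. -/
def lsub3 {α β γ : Type*} [NormedAddCommGroup α] [InnerProductSpace ℝ α]
    [NormedAddCommGroup β] [InnerProductSpace ℝ β]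
    [NormedAddCommGroup γ] [InnerProductSpace ℝ γ]
    (Φ : α → β → γ → EReal) (a : α) (b : β) (c : γ) : Set (α × β × γ) :=
  {v | ∃ w : ℕ → α × β × γ, ∃ vs : ℕ → α × β × γ,
      Tendsto w atTop (𝓝 (a, b, c)) ∧
      Tendsto (fun k => Φ (w k).1 (w k).2.1 (w k).2.2) atTop (𝓝 (Φ a b c)) ∧
      (∀ k, vs k ∈ fsub3 Φ (w k).1 (w k).2.1 (w k).2.2) ∧
      Tendsto vs atTop (𝓝 v)}

/-- A polyhedral set: a finite intersection of closed half-spaces. -/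
def IsPolyhedral {α : Type*} [NormedAddCommGroup α] [InnerProductSpace ℝ α]
    (S : Set α) : Prop :=
  ∃ (m : ℕ) (a : Fin m → α) (b : Fin m → ℝ), S = {z | ∀ i, ⟪a i, z⟫ ≤ b i}

/-- The merit function φ(x,u) = g(x) + h(x) + ι_S(x) + (1/(2δ))‖x-u‖². -/
def phiF {n : ℕ} (S : Set (EuclideanSpace ℝ (Fin n)))
    (g : EuclideanSpace ℝ (Fin n) → EReal) (h : EuclideanSpace ℝ (Fin n) → ℝ) (δ : ℝ)
    (x u : EuclideanSpace ℝ (Fin n)) : EReal :=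
  g x + ((h x : ℝ) : EReal) + (if x ∈ S then (0 : EReal) else ⊤)
    + (((2 * δ)⁻¹ * ‖x - u‖ ^ 2 : ℝ) : EReal)

/-- ϑ(x,u) = φ(x,u)/f(Kx). -/
def varthetaF {n p : ℕ} (S : Set (EuclideanSpace ℝ (Fin n)))
    (g : EuclideanSpace ℝ (Fin n) → EReal) (h : EuclideanSpace ℝ (Fin n) → ℝ)
    (f : EuclideanSpace ℝ (Fin p) → EReal)
    (K : EuclideanSpace ℝ (Fin n) →ₗ[ℝ] EuclideanSpace ℝ (Fin p)) (δ : ℝ)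
    (x u : EuclideanSpace ℝ (Fin n)) : EReal :=
  phiF S g h δ x u / f (K x)

/-- ϖ(x,y,u) = φ(x,u)/(⟨Kx,y⟩ - f*(y)). -/
def varpiF {n p : ℕ} (S : Set (EuclideanSpace ℝ (Fin n)))
    (g : EuclideanSpace ℝ (Fin n) → EReal) (h : EuclideanSpace ℝ (Fin n) → ℝ)
    (f : EuclideanSpace ℝ (Fin p) → EReal)
    (K : EuclideanSpace ℝ (Fin n) →ₗ[ℝ] EuclideanSpace ℝ (Fin p)) (δ : ℝ)
    (x : EuclideanSpace ℝ (Fin n)) (y : EuclideanSpace ℝ (Fin p))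
    (u : EuclideanSpace ℝ (Fin n)) : EReal :=
  phiF S g h δ x u / (((⟪K x, y⟫ : ℝ) : EReal) - econj f y)


/-!
Sufficient decrease of the quotient `ϑ = φ / f ∘ K`. The `x`-update is a forward–backward step
on `g + h - θₖ ⟪Kᵀyᵏ⁺¹, ·⟫`; the three-point inequality of the proximal step and the descent
lemma for `h` decrease `φ(·, uᵏ)` by `ϱ₁ ‖xᵏ⁺¹ - xᵏ‖²` up to the linear term
`θₖ ⟪yᵏ⁺¹, K (xᵏ⁺¹ - xᵏ)⟫`, which the subgradient inequality bounds by
`θₖ (f(Kxᵏ⁺¹) - f(Kxᵏ))`. As `φ(xᵏ, uᵏ) = θₖ f(Kxᵏ)`, and the relaxation step splits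
`(2δ)⁻¹ ‖xᵏ⁺¹ - uᵏ‖²` into `(2δ)⁻¹ ‖xᵏ⁺¹ - uᵏ⁺¹‖² + ϱ₂ ‖uᵏ - uᵏ⁺¹‖²`, this gives
`φ(xᵏ⁺¹, uᵏ⁺¹) + ϱ₁ ‖xᵏ - xᵏ⁺¹‖² + ϱ₂ ‖uᵏ - uᵏ⁺¹‖² ≤ θₖ f(Kxᵏ⁺¹)`; divide by
`f(Kxᵏ⁺¹) ≤ M`. Then `θ` is nonincreasing and bounded below by `0`, so it converges and its
successive gaps, which dominate the squared step lengths, tend to `0`.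
-/

section InnerProductSpace

variable {E : Type*} [NormedAddCommGroup E] [InnerProductSpace ℝ E]

lemma norm_sub_smul_add_smul_sq (p q : E) (t : ℝ) :
    ‖(1 - t) • p + t • q‖ ^ 2 = (1 - t) * ‖p‖ ^ 2 + t * ‖q‖ ^ 2 - t * (1 - t) * ‖p - q‖ ^ 2 := by
  simp only [← real_inner_self_eq_norm_sq, inner_add_left, inner_add_right,
    inner_sub_left, inner_sub_right, real_inner_smul_left, real_inner_smul_right,
    real_inner_comm p q]
  ring

lemma le_add_inner_add_sq_of_lipschitz_gradient [CompleteSpace E] {O : Set E} {h : E → ℝ}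
    {gh : E → E} {L : ℝ}
    (hgrad : ∀ z ∈ O, HasGradientAt h (gh z) z)
    (hlip : ∀ z ∈ O, ∀ w ∈ O, ‖gh z - gh w‖ ≤ L * ‖z - w‖)
    {x z : E} (hseg : segment ℝ x z ⊆ O) :
    h z ≤ h x + ⟪gh x, z - x⟫ + L / 2 * ‖z - x‖ ^ 2 := by
  set γ : ℝ → E := fun t => x + t • (z - x)
  have hγO : ∀ t ∈ Icc (0 : ℝ) 1, γ t ∈ O := fun t ht =>
    hseg (segment_eq_image' ℝ x z ▸ ⟨t, ht, rfl⟩)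
  have hx : x ∈ O := by simpa [γ] using hγO 0 (left_mem_Icc.2 zero_le_one)
  set ψ : ℝ → ℝ := fun t => h (γ t) - t * ⟪gh x, z - x⟫ - L / 2 * t ^ 2 * ‖z - x‖ ^ 2
  have hψ : ∀ t ∈ Icc (0 : ℝ) 1,
      HasDerivAt ψ (⟪gh (γ t), z - x⟫ - ⟪gh x, z - x⟫ - L * t * ‖z - x‖ ^ 2) t := by
    intro t ht
    have hγ : HasDerivAt γ ((1 : ℝ) • (z - x)) t :=
      ((hasDerivAt_id t).smul_const (z - x)).const_add x
    rw [one_smul] at hγ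
    have hhγ := (hgrad _ (hγO t ht)).hasFDerivAt.comp_hasDerivAt t hγ
    simp only [InnerProductSpace.toDual_apply_apply] at hhγ
    have hlin : HasDerivAt (fun s => s * ⟪gh x, z - x⟫) ⟪gh x, z - x⟫ t := by
      simpa using (hasDerivAt_id t).mul_const ⟪gh x, z - x⟫
    have hquad : HasDerivAt (fun s => L / 2 * s ^ 2 * ‖z - x‖ ^ 2) (L * t * ‖z - x‖ ^ 2) t :=
      (((hasDerivAt_pow 2 t).const_mul (L / 2)).mul_const (‖z - x‖ ^ 2)).congr_deriv
        (by push_cast; ring)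
    exact (hhγ.sub hlin).sub hquad
  have hψ_anti : AntitoneOn ψ (Icc 0 1) := by
    refine antitoneOn_of_hasDerivWithinAt_nonpos (convex_Icc 0 1)
      (fun t ht => (hψ t ht).continuousAt.continuousWithinAt)
      (fun t ht => (hψ t (interior_subset ht)).hasDerivWithinAt) fun t ht => ?_
    have ht := interior_subset ht
    have hγt : ‖γ t - x‖ = t * ‖z - x‖ := by
      simp [γ, norm_smul, abs_of_nonneg ht.1]
    calc ⟪gh (γ t), z - x⟫ - ⟪gh x, z - x⟫ - L * t * ‖z - x‖ ^ 2
        = ⟪gh (γ t) - gh x, z - x⟫ - L * ‖γ t - x‖ * ‖z - x‖ := by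
          rw [inner_sub_left, hγt]; ring
      _ ≤ 0 := by
          have := (real_inner_le_norm _ _).trans (mul_le_mul_of_nonneg_right
            (hlip _ (hγO t ht) _ hx) (norm_nonneg (z - x)))
          linarith
  have := hψ_anti (left_mem_Icc.2 zero_le_one) (right_mem_Icc.2 zero_le_one) zero_le_one
  simp only [ψ, γ] at this
  norm_num at this
  linarith

lemma ERealConvex.add_sq_norm_le_of_isMinOn {S : Set E} (hS : Convex ℝ S) {g : E → EReal}
    (hg : ERealConvex g) {c a b : ℝ} {v p w : E} (hp : p ∈ S) (hw : w ∈ S)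
    (hgp : g p = a) (hgw : g w = b)
    (hmin : IsMinOn (fun z => g z + ((c * ‖z - v‖ ^ 2 : ℝ) : EReal)) S p) :
    a + c * ‖p - v‖ ^ 2 + c * ‖p - w‖ ^ 2 ≤ b + c * ‖w - v‖ ^ 2 := by
  -- compare `p` with the points `(1 - t) • p + t • w` and let `t → 0⁺`
  have hchord : ∀ t ∈ Ioc (0 : ℝ) 1,
      a + c * ‖p - v‖ ^ 2 + (1 - t) * (c * ‖p - w‖ ^ 2) ≤ b + c * ‖w - v‖ ^ 2 := by
    intro t ht
    have h1t : 0 ≤ 1 - t := by linarith [ht.2]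
    have hmin_t := (isMinOn_iff.1 hmin _ (hS hp hw h1t ht.1.le (by ring))).trans
      (add_le_add_left (hg p w (1 - t) t h1t ht.1.le (by ring)) _)
    rw [hgp, hgw] at hmin_t
    have hreal : a + c * ‖p - v‖ ^ 2
        ≤ (1 - t) * a + t * b + c * ‖(1 - t) • (p - v) + t • (w - v)‖ ^ 2 := by
      have hsplit : (1 - t) • p + t • w - v = (1 - t) • (p - v) + t • (w - v) := by module
      rw [← hsplit]
      exact_mod_cast hmin_t
    rw [norm_sub_smul_add_smul_sq, sub_sub_sub_cancel_right] at hreal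
    refine le_of_mul_le_mul_left ?_ ht.1
    linarith
  have hlim : Tendsto (fun t : ℝ => a + c * ‖p - v‖ ^ 2 + (1 - t) * (c * ‖p - w‖ ^ 2))
      (𝓝[>] 0) (𝓝 (a + c * ‖p - v‖ ^ 2 + (1 - 0) * (c * ‖p - w‖ ^ 2))) :=
    tendsto_nhdsWithin_of_tendsto_nhds (Continuous.tendsto (by fun_prop) 0)
  simpa using le_of_tendsto hlim
    (eventually_of_mem (Ioc_mem_nhdsGT zero_lt_one) hchord)

lemma prox_grad_step_descent [CompleteSpace E] {S : Set E} (hS : Convex ℝ S) {g : E → EReal}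
    (hg : ERealConvex g) {O : Set E} {h : E → ℝ} {gh : E → E} {L : ℝ}
    (hgrad : ∀ z ∈ O, HasGradientAt h (gh z) z)
    (hlip : ∀ z ∈ O, ∀ w ∈ O, ‖gh z - gh w‖ ≤ L * ‖z - w‖) (hSO : S ⊆ O)
    {δ a a' : ℝ} (hδ : δ ≠ 0) {x x' u q : E} (hx : x ∈ S) (hx' : x' ∈ S)
    (hgx : g x = a) (hgx' : g x' = a')
    (hmin : IsMinOn (fun w => g w + (((2 * δ)⁻¹ * ‖w - (u - δ • (gh x - q))‖ ^ 2 : ℝ) : EReal))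
      S x') :
    a' + h x' + (2 * δ)⁻¹ * ‖x' - u‖ ^ 2 + (1 - δ * L) / (2 * δ) * ‖x' - x‖ ^ 2
      ≤ a + h x + (2 * δ)⁻¹ * ‖x - u‖ ^ 2 + ⟪q, x' - x⟫ := by
  have hprox := hg.add_sq_norm_le_of_isMinOn hS hx' hx hgx' hgx hmin
  have hdesc := le_add_inner_add_sq_of_lipschitz_gradient hgrad hlip
    ((hS.segment_subset hx hx').trans hSO)
  have hexpand : ∀ w : E, (2 * δ)⁻¹ * ‖w - (u - δ • (gh x - q))‖ ^ 2
      = (2 * δ)⁻¹ * ‖w - u‖ ^ 2 + ⟪w - u, gh x - q⟫ + δ / 2 * ‖gh x - q‖ ^ 2 := by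
    intro w
    rw [sub_sub_eq_add_sub, add_sub_right_comm, norm_add_sq_real, inner_smul_right, norm_smul,
      mul_pow, Real.norm_eq_abs, sq_abs]
    field_simp
  have hinner : ⟪x' - u, gh x - q⟫ = ⟪x - u, gh x - q⟫ + ⟪gh x, x' - x⟫ - ⟪q, x' - x⟫ := by
    simp only [inner_sub_left, inner_sub_right, real_inner_comm]
    ring
  have hcoef : (1 - δ * L) / (2 * δ) = (2 * δ)⁻¹ - L / 2 := by field_simp
  rw [hexpand, hexpand, hinner] at hprox
  rw [hcoef]
  linarith

lemma norm_sub_sq_eq_of_relaxation {σ : ℝ} (hσ : σ ≠ 0) (x u : E) :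
    ‖x - u‖ ^ 2 = ‖x - ((1 - σ) • u + σ • x)‖ ^ 2
      + (1 - (1 - σ) ^ 2) / σ ^ 2 * ‖u - ((1 - σ) • u + σ • x)‖ ^ 2 := by
  have hx : x - ((1 - σ) • u + σ • x) = (1 - σ) • (x - u) := by module
  have hu : u - ((1 - σ) • u + σ • x) = σ • (u - x) := by module
  rw [hx, hu, norm_smul, norm_smul, mul_pow, mul_pow, Real.norm_eq_abs, Real.norm_eq_abs,
    sq_abs, sq_abs, norm_sub_rev u x]
  field_simp
  ring

end InnerProductSpace

lemma le_sub_div_of_add_le_mul {φ s θ θ' b M : ℝ} (hb : 0 < b) (hbM : b ≤ M) (hs : 0 ≤ s)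
    (hθ' : φ = θ' * b) (h : φ + s ≤ θ * b) : θ' ≤ θ - s / M := by
  have hsb : s / b ≤ θ - θ' := by
    rw [div_le_iff₀ hb]
    linarith
  linarith [div_le_div_of_nonneg_left hs hb hbM]

lemma phiF_eq_mul_of_coe_eq_varthetaF {n p : ℕ} {S : Set (EuclideanSpace ℝ (Fin n))}
    {g : EuclideanSpace ℝ (Fin n) → EReal} {h : EuclideanSpace ℝ (Fin n) → ℝ}
    {f : EuclideanSpace ℝ (Fin p) → EReal}
    {K : EuclideanSpace ℝ (Fin n) →ₗ[ℝ] EuclideanSpace ℝ (Fin p)} {δ a b θ : ℝ}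
    {x u : EuclideanSpace ℝ (Fin n)} (hx : x ∈ S) (hgx : g x = a) (hfx : f (K x) = b)
    (hb : b ≠ 0) (hθ : (θ : EReal) = varthetaF S g h f K δ x u) :
    a + h x + (2 * δ)⁻¹ * ‖x - u‖ ^ 2 = θ * b := by
  rw [varthetaF, phiF, if_pos hx, hgx, hfx, add_zero, ← EReal.coe_add, ← EReal.coe_add,
    ← EReal.coe_div, EReal.coe_eq_coe_iff] at hθ
  rw [hθ, div_mul_cancel₀ _ hb]

lemma tendsto_norm_zero_of_mul_sq_le_sub_succ {E : Type*} [NormedAddCommGroup E]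
    {θ : ℕ → ℝ} {d : ℕ → E} {c : ℝ} (hc : 0 < c) (hθ : Antitone θ) (hθbdd : BddBelow (range θ))
    (h : ∀ k, c * ‖d k‖ ^ 2 ≤ θ k - θ (k + 1)) :
    Tendsto (fun k => ‖d k‖) atTop (𝓝 0) := by
  have hθlim := tendsto_atTop_ciInf hθ hθbdd
  have hgap : Tendsto (fun k => θ k - θ (k + 1)) atTop (𝓝 0) := by
    simpa using hθlim.sub (hθlim.comp (tendsto_add_atTop_nat 1))
  have hsq : Tendsto (fun k => ‖d k‖ ^ 2) atTop (𝓝 0) := by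
    refine squeeze_zero (fun k => by positivity) (fun k => ?_) (by simpa using hgap.div_const c)
    rw [le_div_iff₀ hc, mul_comm]
    exact h k
  simpa using hsq.sqrt

theorem fpsa_step_sufficient_decrease {E V : Type*}
    [NormedAddCommGroup E] [InnerProductSpace ℝ E] [FiniteDimensional ℝ E]
    [NormedAddCommGroup V] [InnerProductSpace ℝ V] [FiniteDimensional ℝ V]
    {S : Set E} (hS : Convex ℝ S) {g : E → EReal} (hg : ERealConvex g)
    {O : Set E} {h : E → ℝ} {gh : E → E} {L : ℝ}
    (hgrad : ∀ z ∈ O, HasGradientAt h (gh z) z)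
    (hlip : ∀ z ∈ O, ∀ w ∈ O, ‖gh z - gh w‖ ≤ L * ‖z - w‖) (hSO : S ⊆ O)
    {f : V → EReal} {K : E →ₗ[ℝ] V} {δ σ θ θ' M a a' b b' : ℝ}
    (hδ : 0 < δ) (hδL : δ * L ≤ 1) (hσ : 0 < σ) (hσ2 : σ ≤ 2)
    {x x' u u' : E} {y : V} (hx : x ∈ S) (hx' : x' ∈ S)
    (hgx : g x = a) (hgx' : g x' = a') (hfx : f (K x) = b) (hfx' : f (K x') = b')
    (hb' : 0 < b') (hb'M : b' ≤ M) (hθ : 0 ≤ θ)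
    (hy : y ∈ csubdiff f (K x))
    (hmin : ∀ w ∈ S,
      g x' + (((2 * δ)⁻¹ * ‖x' - u + δ • gh x - (θ * δ) • LinearMap.adjoint K y‖ ^ 2 : ℝ) : EReal)
      ≤ g w + (((2 * δ)⁻¹ * ‖w - u + δ • gh x - (θ * δ) • LinearMap.adjoint K y‖ ^ 2 : ℝ) : EReal))
    (hu' : u' = (1 - σ) • u + σ • x')
    (hφ : a + h x + (2 * δ)⁻¹ * ‖x - u‖ ^ 2 = θ * b)
    (hφ' : a' + h x' + (2 * δ)⁻¹ * ‖x' - u'‖ ^ 2 = θ' * b') :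
    θ' ≤ θ - ((1 - δ * L) / (2 * δ)) / M * ‖x - x'‖ ^ 2
      - ((1 - (1 - σ) ^ 2) / (2 * σ ^ 2 * δ)) / M * ‖u - u'‖ ^ 2 := by
  set q := θ • LinearMap.adjoint K y
  have hcenter : ∀ w : E, w - u + δ • gh x - (θ * δ) • LinearMap.adjoint K y
      = w - (u - δ • (gh x - q)) := fun w => by module
  have hstep := prox_grad_step_descent hS hg hgrad hlip hSO hδ.ne' hx hx' hgx hgx'
    (isMinOn_iff.2 fun w hw => by simpa only [hcenter] using hmin w hw)
  have hsubgrad : b + ⟪y, K x' - K x⟫ ≤ b' := by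
    have := hy (K x')
    rw [hfx, hfx'] at this
    exact_mod_cast this
  have hlinear : ⟪q, x' - x⟫ ≤ θ * (b' - b) := by
    rw [real_inner_smul_left, LinearMap.adjoint_inner_left, map_sub]
    exact mul_le_mul_of_nonneg_left (by linarith) hθ
  have hrelax : (2 * δ)⁻¹ * ‖x' - u‖ ^ 2 = (2 * δ)⁻¹ * ‖x' - u'‖ ^ 2
      + (1 - (1 - σ) ^ 2) / (2 * σ ^ 2 * δ) * ‖u - u'‖ ^ 2 := by
    rw [norm_sub_sq_eq_of_relaxation hσ.ne' x' u, ← hu']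
    field_simp
  have hϱ₂ : 0 ≤ (1 - (1 - σ) ^ 2) / (2 * σ ^ 2 * δ) := by apply div_nonneg <;> nlinarith
  set s := (1 - δ * L) / (2 * δ) * ‖x' - x‖ ^ 2
    + (1 - (1 - σ) ^ 2) / (2 * σ ^ 2 * δ) * ‖u - u'‖ ^ 2
  have hdecrease : a' + h x' + (2 * δ)⁻¹ * ‖x' - u'‖ ^ 2 + s ≤ θ * b' := by linarith
  calc θ' ≤ θ - s / M := le_sub_div_of_add_le_mul hb' hb'M (by positivity) hφ' hdecrease
    _ = _ := by rw [norm_sub_rev x x']; ring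

theorem stmt6_general {n p : ℕ}
    (S : Set (EuclideanSpace ℝ (Fin n)))
    (g : EuclideanSpace ℝ (Fin n) → EReal)
    (h : EuclideanSpace ℝ (Fin n) → ℝ)
    (gh : EuclideanSpace ℝ (Fin n) → EuclideanSpace ℝ (Fin n))
    (f : EuclideanSpace ℝ (Fin p) → EReal)
    (K : EuclideanSpace ℝ (Fin n) →ₗ[ℝ] EuclideanSpace ℝ (Fin p))
    (L δ : ℝ)
    (hSconv : Convex ℝ S)
    (hgP : ERealProper g) (hgconv : ERealConvex g)
    (hL : 0 < L)
    (hhC1 : ∃ O : Set (EuclideanSpace ℝ (Fin n)), IsOpen O ∧ S ⊆ O ∧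
      (∀ z ∈ O, HasGradientAt h (gh z) z) ∧
      (∀ z ∈ O, ∀ w ∈ O, ‖gh z - gh w‖ ≤ L * ‖z - w‖))
    (hδ : 0 < δ) (hδL : δ < 1 / L)
    (σ : ℝ) (hσ : 0 < σ) (hσ2 : σ < 2)
    (x u : ℕ → EuclideanSpace ℝ (Fin n)) (y : ℕ → EuclideanSpace ℝ (Fin p)) (θ : ℕ → ℝ)
    (hxS : ∀ k, x k ∈ S ∧ g (x k) ≠ ⊤)
    (hy : ∀ k, y (k+1) ∈ csubdiff f (K (x k)))
    (hxmin : ∀ k, ∀ w ∈ S,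
      g (x (k+1)) + (((2*δ)⁻¹ * ‖x (k+1) - u k + δ • gh (x k)
          - (θ k * δ) • (LinearMap.adjoint K) (y (k+1))‖ ^ 2 : ℝ) : EReal)
        ≤ g w + (((2*δ)⁻¹ * ‖w - u k + δ • gh (x k)
          - (θ k * δ) • (LinearMap.adjoint K) (y (k+1))‖ ^ 2 : ℝ) : EReal))
    (hu : ∀ k, u (k+1) = (1 - σ) • u k + σ • x (k+1))
    (hθ : ∀ k, (θ k : EReal) = varthetaF S g h f K δ (x k) (u k))
    (hθnn : ∀ k, 0 ≤ θ k)
    (m M : ℝ) (hm : 0 < m)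
    (hmM : ∀ k, (m : EReal) ≤ f (K (x k)) ∧ f (K (x k)) ≤ (M : EReal))
    :
    (∀ k : ℕ, θ (k+1) ≤ θ k
        - ((1 - δ * L) / (2 * δ)) / M * ‖x k - x (k+1)‖ ^ 2
        - ((1 - (1 - σ) ^ 2) / (2 * σ ^ 2 * δ)) / M * ‖u k - u (k+1)‖ ^ 2)
    ∧ (∀ k : ℕ, θ (k+1) ≤ θ k)
    ∧ (∃ θbar : ℝ, 0 ≤ θbar ∧ Tendsto θ atTop (𝓝 θbar))
    ∧ Tendsto (fun k => ‖x k - x (k+1)‖) atTop (𝓝 0)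
    ∧ Tendsto (fun k => ‖u k - u (k+1)‖) atTop (𝓝 0) := by
  obtain ⟨O, -, hSO, hgrad, hlip⟩ := hhC1
  have hδL_lt : δ * L < 1 := by rwa [lt_div_iff₀ hL] at hδL
  have hgx : ∀ k, g (x k) = (g (x k)).toReal := fun k =>
    (EReal.coe_toReal (hxS k).2 (hgP.1 _)).symm
  have hfx : ∀ k, f (K (x k)) = (f (K (x k))).toReal := fun k =>
    (EReal.coe_toReal (ne_top_of_le_ne_top (EReal.coe_ne_top M) (hmM k).2)
      (ne_bot_of_le_ne_bot (EReal.coe_ne_bot m) (hmM k).1)).symm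
  have hfm : ∀ k, m ≤ (f (K (x k))).toReal := fun k => EReal.coe_le_coe_iff.1 (hfx k ▸ (hmM k).1)
  have hfM : ∀ k, (f (K (x k))).toReal ≤ M := fun k => EReal.coe_le_coe_iff.1 (hfx k ▸ (hmM k).2)
  have hφ := fun k => phiF_eq_mul_of_coe_eq_varthetaF (hxS k).1 (hgx k) (hfx k)
    (hm.trans_le (hfm k)).ne' (hθ k)
  have hdecr := fun k => fpsa_step_sufficient_decrease hSconv hgconv hgrad hlip hSO hδ hδL_lt.le hσ
    hσ2.le (hxS k).1 (hxS (k + 1)).1 (hgx k) (hgx (k + 1)) (hfx k) (hfx (k + 1))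
    (hm.trans_le (hfm _)) (hfM _) (hθnn k) (hy k) (hxmin k) (hu k) (hφ k) (hφ (k + 1))
  have hMpos : 0 < M := hm.trans_le ((hfm 0).trans (hfM 0))
  have hϱ₁ : 0 < (1 - δ * L) / (2 * δ) / M := by apply div_pos (div_pos _ _) hMpos <;> linarith
  have hϱ₂ : 0 < (1 - (1 - σ) ^ 2) / (2 * σ ^ 2 * δ) / M :=
    div_pos (div_pos (by nlinarith) (by positivity)) hMpos
  have hanti : Antitone θ := antitone_nat_of_succ_le fun k => by
    linarith [hdecr k, mul_nonneg hϱ₁.le (sq_nonneg ‖x k - x (k + 1)‖),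
      mul_nonneg hϱ₂.le (sq_nonneg ‖u k - u (k + 1)‖)]
  have hbdd : BddBelow (range θ) := ⟨0, forall_mem_range.2 hθnn⟩
  refine ⟨hdecr, fun k => hanti k.le_succ,
    ⟨⨅ k, θ k, le_ciInf hθnn, tendsto_atTop_ciInf hanti hbdd⟩, ?_, ?_⟩
  · refine tendsto_norm_zero_of_mul_sq_le_sub_succ hϱ₁ hanti hbdd fun k => ?_
    linarith [hdecr k, mul_nonneg hϱ₂.le (sq_nonneg ‖u k - u (k + 1)‖)]
  · refine tendsto_norm_zero_of_mul_sq_le_sub_succ hϱ₂ hanti hbdd fun k => ?_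
    linarith [hdecr k, mul_nonneg hϱ₁.le (sq_nonneg ‖x k - x (k + 1)‖)]

theorem stmt6 {n p : ℕ}
    (S : Set (EuclideanSpace ℝ (Fin n)))
    (g : EuclideanSpace ℝ (Fin n) → EReal)
    (h : EuclideanSpace ℝ (Fin n) → ℝ)
    (gh : EuclideanSpace ℝ (Fin n) → EuclideanSpace ℝ (Fin n))
    (f : EuclideanSpace ℝ (Fin p) → EReal)
    (K : EuclideanSpace ℝ (Fin n) →ₗ[ℝ] EuclideanSpace ℝ (Fin p))
    (L δ : ℝ)
    (hS : S.Nonempty) (hSconv : Convex ℝ S) (hScomp : IsCompact S)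
    (hgP : ERealProper g) (hgconv : ERealConvex g) (hglsc : LowerSemicontinuous g)
    (hfP : ERealProper f) (hfconv : ERealConvex f) (hflsc : LowerSemicontinuous f)
    (hL : 0 < L)
    (hhC1 : ∃ O : Set (EuclideanSpace ℝ (Fin n)), IsOpen O ∧ S ⊆ O ∧
      (∀ z ∈ O, HasGradientAt h (gh z) z) ∧
      (∀ z ∈ O, ∀ w ∈ O, ‖gh z - gh w‖ ≤ L * ‖z - w‖))
    (hKS : ∀ z ∈ S, K z ∈ interior (edom f))
    (hfpos : ∀ z ∈ S, (0 : EReal) < f (K z))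
    (hghnn : ∀ z ∈ S, (0 : EReal) ≤ g z + ((h z : ℝ) : EReal))
    (hSg : ∃ z ∈ S, g z ≠ ⊤)
    (hδ : 0 < δ) (hδL : δ < 1 / L)
    (σ : ℝ) (hσ : 0 < σ) (hσ2 : σ < 2)
    (x u : ℕ → EuclideanSpace ℝ (Fin n)) (y : ℕ → EuclideanSpace ℝ (Fin p)) (θ : ℕ → ℝ)
    (hxS : ∀ k, x k ∈ S ∧ g (x k) ≠ ⊤)
    (hy : ∀ k, y (k+1) ∈ csubdiff f (K (x k)))
    (hxmin : ∀ k, ∀ w ∈ S,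
      g (x (k+1)) + (((2*δ)⁻¹ * ‖x (k+1) - u k + δ • gh (x k)
          - (θ k * δ) • (LinearMap.adjoint K) (y (k+1))‖ ^ 2 : ℝ) : EReal)
        ≤ g w + (((2*δ)⁻¹ * ‖w - u k + δ • gh (x k)
          - (θ k * δ) • (LinearMap.adjoint K) (y (k+1))‖ ^ 2 : ℝ) : EReal))
    (hu : ∀ k, u (k+1) = (1 - σ) • u k + σ • x (k+1))
    (hθ : ∀ k, (θ k : EReal) = varthetaF S g h f K δ (x k) (u k))
    (hθnn : ∀ k, 0 ≤ θ k)
    (m M : ℝ) (hm : 0 < m)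
    (hmM : ∀ k, (m : EReal) ≤ f (K (x k)) ∧ f (K (x k)) ≤ (M : EReal))
    :
    (∀ k : ℕ, θ (k+1) ≤ θ k
        - ((1 - δ * L) / (2 * δ)) / M * ‖x k - x (k+1)‖ ^ 2
        - ((1 - (1 - σ) ^ 2) / (2 * σ ^ 2 * δ)) / M * ‖u k - u (k+1)‖ ^ 2)
    ∧ (∀ k : ℕ, θ (k+1) ≤ θ k)
    ∧ (∃ θbar : ℝ, 0 ≤ θbar ∧ Tendsto θ atTop (𝓝 θbar))
    ∧ Tendsto (fun k => ‖x k - x (k+1)‖) atTop (𝓝 0)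
    ∧ Tendsto (fun k => ‖u k - u (k+1)‖) atTop (𝓝 0) :=
  stmt6_general S g h gh f K L δ hSconv hgP hgconv hL hhC1 hδ hδL σ hσ hσ2 x u y θ hxS hy hxmin hu
    hθ hθnn m M hm hmM
end
end

section
/- (Theorem 3.3(ii)) Let the sequences (xᵏ, yᵏ, uᵏ, θ_k) be generated by the FPSA iteration, let 0 < m ≤ f(Kxᵏ) ≤ M for all k, and let θ̄ = lim_{k→∞} θ_k. Then for every accumulation point (x̂, ŷ, û) of the sequence (xᵏ, yᵏ, uᵏ), one has ϑ(x̂, û) = θ̄; that is, ϑ is constant equal to θ̄ on the set of accumulation points. -/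
open Filter Metric Set RealInnerProductSpace
open scoped Topology Classical

noncomputable section

/-!
Along the subsequence, `θ_k`, `f (K x_k)` (continuous on the interior of its domain, being
convex), `h x_k` and `‖x_k - u_k‖²` all converge, and `θ_k f (K x_k) = φ(x_k, u_k)`. Hence
`g (x_k)` converges to `ℓ = θ̄ f (K x̂) - h x̂ - ‖x̂ - û‖² / (2δ)`, and it remains to show
`g x̂ = ℓ`. Lower semicontinuity gives `g x̂ ≤ ℓ`. Conversely, `x_k` minimises
`g + ‖· - c‖² / (2δ)` over `S` for a centre `c` that stays bounded (`u_k` is a relaxed average of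
points of the compact `S` with `|1 - σ| < 1`); testing this against `x̂` gives
`g (x_k) ≤ g x̂ + o(1)`.
-/

theorem EReal.toReal_add_le_toReal_add_of_add_coe_le {a b : EReal} {r s : ℝ}
    (ha : a ≠ ⊤) (ha' : a ≠ ⊥) (hb : b ≠ ⊤) (hb' : b ≠ ⊥) (h : a + r ≤ b + s) :
    a.toReal + r ≤ b.toReal + s := by
  rw [← EReal.coe_toReal ha ha', ← EReal.coe_toReal hb hb'] at h
  exact_mod_cast h

theorem ERealConvex.convexOn_toReal {E : Type*} [AddCommGroup E] [Module ℝ E] {f : E → EReal}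
    (hf : ERealConvex f) (hbot : ∀ z, f z ≠ ⊥) :
    ConvexOn ℝ (edom f) (fun z => (f z).toReal) := by
  have hle : ∀ z ∈ edom f, ∀ w ∈ edom f, ∀ a b : ℝ, 0 ≤ a → 0 ≤ b → a + b = 1 →
      f (a • z + b • w) ≤ ((a * (f z).toReal + b * (f w).toReal : ℝ) : EReal) := by
    intro z hz w hw a b ha hb hab
    have h := hf z w a b ha hb hab
    rw [← EReal.coe_toReal hz (hbot z), ← EReal.coe_toReal hw (hbot w)] at h
    exact_mod_cast h
  refine ⟨fun z hz w hw a b ha hb hab => ?_, fun z hz w hw a b ha hb hab => ?_⟩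
  · exact ne_top_of_le_ne_top (EReal.coe_ne_top _) (hle z hz w hw a b ha hb hab)
  · have h := EReal.toReal_le_toReal (hle z hz w hw a b ha hb hab) (hbot _) (EReal.coe_ne_top _)
    simpa [← EReal.coe_mul, ← EReal.coe_add] using h

theorem ERealConvex.continuousOn_toReal {E : Type*} [NormedAddCommGroup E] [NormedSpace ℝ E]
    [FiniteDimensional ℝ E] {f : E → EReal} (hf : ERealConvex f) (hbot : ∀ z, f z ≠ ⊥) :
    ContinuousOn (fun z => (f z).toReal) (interior (edom f)) :=
  have hconv := hf.convexOn_toReal hbot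
  (hconv.subset interior_subset hconv.1.interior).continuousOn isOpen_interior

theorem LowerSemicontinuous.le_of_tendsto {X α : Type*} [TopologicalSpace X] [LinearOrder α]
    [DenselyOrdered α] [TopologicalSpace α] [OrderTopology α] {g : X → α}
    (hg : LowerSemicontinuous g) {z : ℕ → X} {ζ : X} {c : α} (hz : Tendsto z atTop (𝓝 ζ))
    (hgz : Tendsto (fun j => g (z j)) atTop (𝓝 c)) : g ζ ≤ c := by
  by_contra! hlt
  obtain ⟨b, hcb, hb⟩ := exists_between hlt
  obtain ⟨j, hbj, hjb⟩ :=
    ((hz.eventually (hg ζ b hb)).and (hgz.eventually (eventually_lt_nhds hcb))).exists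
  exact lt_asymm hbj hjb

theorem abs_sq_norm_sub_sub_sq_norm_sub_le {E : Type*} [SeminormedAddCommGroup E] (a b c : E) :
    |‖a - c‖ ^ 2 - ‖b - c‖ ^ 2| ≤ ‖a - b‖ * (‖a - c‖ + ‖b - c‖) := by
  rw [sq_sub_sq, abs_mul, abs_of_nonneg (by positivity), mul_comm]
  gcongr
  simpa using abs_norm_sub_norm_le (a - c) (b - c)

theorem tendsto_sq_norm_sub_sub_sq_norm_sub {E : Type*} [SeminormedAddCommGroup E]
    {z c : ℕ → E} {ζ : E} (hz : Tendsto z atTop (𝓝 ζ)) (hc : ∃ C, ∀ j, ‖c j‖ ≤ C) :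
    Tendsto (fun j => ‖ζ - c j‖ ^ 2 - ‖z j - c j‖ ^ 2) atTop (𝓝 0) := by
  obtain ⟨C, hC⟩ := hc
  have hd : Tendsto (fun j => ‖ζ - z j‖) atTop (𝓝 0) := by
    simpa using ((tendsto_const_nhds (x := ζ)).sub hz).norm
  refine squeeze_zero_norm (fun j => ?_)
    (by simpa using hd.mul (hd.const_add (2 * (‖ζ‖ + C))))
  have h₁ : ‖ζ - c j‖ ≤ ‖ζ‖ + C := (norm_sub_le _ _).trans (by linarith [hC j])
  have h₂ : ‖z j - c j‖ ≤ ‖ζ - z j‖ + (‖ζ‖ + C) := by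
    calc ‖z j - c j‖ ≤ ‖z j - ζ‖ + ‖ζ - c j‖ := norm_sub_le_norm_sub_add_norm_sub _ _ _
      _ ≤ ‖ζ - z j‖ + (‖ζ‖ + C) := by rw [norm_sub_rev]; linarith
  calc ‖‖ζ - c j‖ ^ 2 - ‖z j - c j‖ ^ 2‖
      ≤ ‖ζ - z j‖ * (‖ζ - c j‖ + ‖z j - c j‖) := abs_sq_norm_sub_sub_sq_norm_sub_le _ _ _
    _ ≤ ‖ζ - z j‖ * (2 * (‖ζ‖ + C) + ‖ζ - z j‖) :=
      mul_le_mul_of_nonneg_left (by linarith) (norm_nonneg _)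

theorem LowerSemicontinuous.eq_of_tendsto_of_prox {E : Type*} [SeminormedAddCommGroup E]
    {g : E → EReal} (hg : LowerSemicontinuous g) (hbot : ∀ z, g z ≠ ⊥) {z c : ℕ → E} {ζ : E}
    {r ℓ : ℝ} (hz : Tendsto z atTop (𝓝 ζ)) (hc : ∃ C, ∀ j, ‖c j‖ ≤ C)
    (hfin : ∀ j, g (z j) ≠ ⊤)
    (hprox : ∀ j, g (z j) + ((r * ‖z j - c j‖ ^ 2 : ℝ) : EReal)
      ≤ g ζ + ((r * ‖ζ - c j‖ ^ 2 : ℝ) : EReal))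
    (hℓ : Tendsto (fun j => (g (z j)).toReal) atTop (𝓝 ℓ)) :
    g ζ = ℓ := by
  have hle : g ζ ≤ ℓ := hg.le_of_tendsto hz <|
    ((continuous_coe_real_ereal.tendsto ℓ).comp hℓ).congr
      fun j => EReal.coe_toReal (hfin j) (hbot _)
  have hζ : g ζ ≠ ⊤ := ne_top_of_le_ne_top (EReal.coe_ne_top ℓ) hle
  rw [← EReal.coe_toReal hζ (hbot ζ)] at hle ⊢
  have hreal : ∀ j, (g (z j)).toReal ≤ (g ζ).toReal + r * (‖ζ - c j‖ ^ 2 - ‖z j - c j‖ ^ 2) :=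
    fun j => by
      have := EReal.toReal_add_le_toReal_add_of_add_coe_le (hfin j) (hbot _) hζ (hbot _) (hprox j)
      linarith
  have hge : ℓ ≤ (g ζ).toReal := le_of_tendsto_of_tendsto' hℓ
    (by simpa using ((tendsto_sq_norm_sub_sub_sq_norm_sub hz hc).const_mul r).const_add _) hreal
  exact congrArg _ (le_antisymm (EReal.coe_le_coe_iff.1 hle) hge)

theorem exists_norm_le_of_relaxation {E : Type*} [SeminormedAddCommGroup E] [NormedSpace ℝ E]
    {σ R : ℝ} (hσ : |1 - σ| < 1) {x u : ℕ → E} (hx : ∀ k, ‖x (k + 1)‖ ≤ R)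
    (hu : ∀ k, u (k + 1) = (1 - σ) • u k + σ • x (k + 1)) :
    ∃ B, ∀ k, ‖u k‖ ≤ B := by
  set B := max ‖u 0‖ (|σ| * R / (1 - |1 - σ|))
  have hσR : |σ| * R ≤ (1 - |1 - σ|) * B := by
    have h := le_max_right ‖u 0‖ (|σ| * R / (1 - |1 - σ|))
    rw [div_le_iff₀ (by linarith)] at h
    linarith
  refine ⟨B, fun k => ?_⟩
  induction k with
  | zero => exact le_max_left _ _
  | succ k ih =>
    calc ‖u (k + 1)‖ ≤ |1 - σ| * ‖u k‖ + |σ| * ‖x (k + 1)‖ := by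
          rw [hu k, ← Real.norm_eq_abs, ← Real.norm_eq_abs, ← norm_smul, ← norm_smul]
          exact norm_add_le _ _
      _ ≤ |1 - σ| * B + |σ| * R := by gcongr; exact hx k
      _ ≤ B := by linarith

theorem exists_norm_sub_smul_add_smul_le {E : Type*} [SeminormedAddCommGroup E]
    [NormedSpace ℝ E] (δ : ℝ) {a b v : ℕ → E} {s : ℕ → ℝ} (ha : ∃ A, ∀ j, ‖a j‖ ≤ A)
    (hb : ∃ B, ∀ j, ‖b j‖ ≤ B) (hs : ∃ T, ∀ j, |s j| ≤ T) (hv : ∃ V, ∀ j, ‖v j‖ ≤ V) :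
    ∃ C, ∀ j, ‖a j - δ • b j + (s j * δ) • v j‖ ≤ C := by
  obtain ⟨A, hA⟩ := ha
  obtain ⟨B, hB⟩ := hb
  obtain ⟨T, hT⟩ := hs
  obtain ⟨V, hV⟩ := hv
  have hT0 : 0 ≤ T := (abs_nonneg _).trans (hT 0)
  refine ⟨A + |δ| * B + T * |δ| * V, fun j => ?_⟩
  calc ‖a j - δ • b j + (s j * δ) • v j‖ ≤ ‖a j‖ + ‖δ • b j‖ + ‖(s j * δ) • v j‖ :=
        (norm_add_le _ _).trans (by gcongr; exact norm_sub_le _ _)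
    _ = ‖a j‖ + |δ| * ‖b j‖ + |s j| * |δ| * ‖v j‖ := by
        simp only [norm_smul, Real.norm_eq_abs, abs_mul]
    _ ≤ A + |δ| * B + T * |δ| * V := by gcongr <;> simp only [hA, hB, hT, hV]

section FPSA

local notation "𝔼" n:max => EuclideanSpace ℝ (Fin n)

variable {n p : ℕ} {S : Set (𝔼 n)} {g : 𝔼 n → EReal} {h : 𝔼 n → ℝ} {gh : 𝔼 n → 𝔼 n}
  {f : 𝔼 p → EReal} {K : 𝔼 n →ₗ[ℝ] 𝔼 p} {δ : ℝ}

theorem coe_eq_varthetaF_iff {x u : 𝔼 n} {t : ℝ} (hx : x ∈ S) (hg : g x ≠ ⊤) (hg' : g x ≠ ⊥)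
    (hf : f (K x) ≠ ⊤) (hf' : 0 < f (K x)) :
    (t : EReal) = varthetaF S g h f K δ x u
      ↔ t * (f (K x)).toReal = (g x).toReal + h x + (2 * δ)⁻¹ * ‖x - u‖ ^ 2 := by
  rw [← eq_div_iff (EReal.toReal_pos hf' hf).ne']
  conv_lhs => rw [varthetaF, phiF, if_pos hx, add_zero, ← EReal.coe_toReal hg hg',
    ← EReal.coe_toReal hf hf'.ne_bot]
  norm_cast
  rw [← EReal.coe_div, EReal.coe_eq_coe_iff]

theorem fpsa_g_eq_of_tendsto {L σ : ℝ} {x u : ℕ → 𝔼 n} {y : ℕ → 𝔼 p} {θ : ℕ → ℝ}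
    {φ : ℕ → ℕ} {xh : 𝔼 n} {yh : 𝔼 p} {ℓ : ℝ}
    (hScomp : IsCompact S) (hglsc : LowerSemicontinuous g) (hgbot : ∀ z, g z ≠ ⊥)
    (hlip : ∀ z ∈ S, ∀ w ∈ S, ‖gh z - gh w‖ ≤ L * ‖z - w‖) (hσ : |1 - σ| < 1)
    (hxS : ∀ k, x k ∈ S ∧ g (x k) ≠ ⊤)
    (hxmin : ∀ k, ∀ w ∈ S,
      g (x (k+1)) + (((2*δ)⁻¹ * ‖x (k+1) - u k + δ • gh (x k)
          - (θ k * δ) • (LinearMap.adjoint K) (y (k+1))‖ ^ 2 : ℝ) : EReal)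
        ≤ g w + (((2*δ)⁻¹ * ‖w - u k + δ • gh (x k)
          - (θ k * δ) • (LinearMap.adjoint K) (y (k+1))‖ ^ 2 : ℝ) : EReal))
    (hu : ∀ k, u (k+1) = (1 - σ) • u k + σ • x (k+1)) (hθ : ∃ T, ∀ k, |θ k| ≤ T)
    (hφ : StrictMono φ) (hx : Tendsto (fun j => x (φ j)) atTop (𝓝 xh))
    (hy : Tendsto (fun j => y (φ j)) atTop (𝓝 yh))
    (hG : Tendsto (fun j => (g (x (φ j))).toReal) atTop (𝓝 ℓ)) :
    g xh = ℓ := by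
  have hxhS : xh ∈ S := hScomp.isClosed.mem_of_tendsto hx (.of_forall fun j => (hxS _).1)
  set c := fun k => u k - δ • gh (x k) + (θ k * δ) • LinearMap.adjoint K (y (k + 1))
  have hprox : ∀ k, g (x (k + 1)) + (((2 * δ)⁻¹ * ‖x (k + 1) - c k‖ ^ 2 : ℝ) : EReal)
      ≤ g xh + (((2 * δ)⁻¹ * ‖xh - c k‖ ^ 2 : ℝ) : EReal) := fun k => by
    convert hxmin k xh hxhS using 6 <;> (simp only [c]; abel)
  -- `x (φ j)` is the prox point of the centre `c (φ j - 1)`; shifting `j` by one makes `φ j ≥ 1`,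
  -- so that the truncated subtraction is harmless.
  have hψ : ∀ j, φ (j + 1) - 1 + 1 = φ (j + 1) :=
    fun j => Nat.sub_add_cancel ((Nat.le_add_left 1 j).trans (hφ.id_le _))
  have hc : ∃ C, ∀ j, ‖c (φ (j + 1) - 1)‖ ≤ C := by
    obtain ⟨R, hR⟩ := hScomp.isBounded.exists_norm_le
    obtain ⟨B, hB⟩ := exists_norm_le_of_relaxation hσ (fun k => hR _ (hxS (k + 1)).1) hu
    obtain ⟨Cg, hCg⟩ := hScomp.exists_bound_of_continuousOn
      (LipschitzOnWith.of_dist_le' (f := gh) fun z hz w hw => by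
        simpa only [dist_eq_norm] using hlip z hz w hw).continuousOn
    obtain ⟨V, hV⟩ := (((LinearMap.adjoint K).continuous_of_finiteDimensional.tendsto yh).comp
      ((tendsto_add_atTop_iff_nat 1).2 hy)).norm.bddAbove_range
    exact exists_norm_sub_smul_add_smul_le δ ⟨B, fun j => hB _⟩ ⟨Cg, fun j => hCg _ (hxS _).1⟩
      (hθ.imp fun T hT j => hT _) ⟨V, fun j => by simpa [hψ] using hV ⟨j, rfl⟩⟩
  refine hglsc.eq_of_tendsto_of_prox hgbot (z := fun j => x (φ (j + 1) - 1 + 1)) ?_ hc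
    (fun j => (hxS _).2) (fun j => hprox _) ?_
  · simpa only [hψ] using (tendsto_add_atTop_iff_nat 1).2 hx
  · simpa only [hψ] using (tendsto_add_atTop_iff_nat 1).2 hG

end FPSA

theorem stmt7_general {n p : ℕ}
    (S : Set (EuclideanSpace ℝ (Fin n)))
    (g : EuclideanSpace ℝ (Fin n) → EReal)
    (h : EuclideanSpace ℝ (Fin n) → ℝ)
    (gh : EuclideanSpace ℝ (Fin n) → EuclideanSpace ℝ (Fin n))
    (f : EuclideanSpace ℝ (Fin p) → EReal)
    (K : EuclideanSpace ℝ (Fin n) →ₗ[ℝ] EuclideanSpace ℝ (Fin p))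
    (L δ : ℝ)
    (hScomp : IsCompact S)
    (hgP : ERealProper g) (hglsc : LowerSemicontinuous g)
    (hfP : ERealProper f) (hfconv : ERealConvex f)
    (hhC1 : ∃ O : Set (EuclideanSpace ℝ (Fin n)), IsOpen O ∧ S ⊆ O ∧
      (∀ z ∈ O, HasGradientAt h (gh z) z) ∧
      (∀ z ∈ O, ∀ w ∈ O, ‖gh z - gh w‖ ≤ L * ‖z - w‖))
    (hKS : ∀ z ∈ S, K z ∈ interior (edom f))
    (hfpos : ∀ z ∈ S, (0 : EReal) < f (K z))
    (σ : ℝ) (hσ : 0 < σ) (hσ2 : σ < 2)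
    (x u : ℕ → EuclideanSpace ℝ (Fin n)) (y : ℕ → EuclideanSpace ℝ (Fin p)) (θ : ℕ → ℝ)
    (hxS : ∀ k, x k ∈ S ∧ g (x k) ≠ ⊤)
    (hxmin : ∀ k, ∀ w ∈ S,
      g (x (k+1)) + (((2*δ)⁻¹ * ‖x (k+1) - u k + δ • gh (x k)
          - (θ k * δ) • (LinearMap.adjoint K) (y (k+1))‖ ^ 2 : ℝ) : EReal)
        ≤ g w + (((2*δ)⁻¹ * ‖w - u k + δ • gh (x k)
          - (θ k * δ) • (LinearMap.adjoint K) (y (k+1))‖ ^ 2 : ℝ) : EReal))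
    (hu : ∀ k, u (k+1) = (1 - σ) • u k + σ • x (k+1))
    (hθ : ∀ k, (θ k : EReal) = varthetaF S g h f K δ (x k) (u k))
    (θbar : ℝ) (hθlim : Tendsto θ atTop (𝓝 θbar))
    :
    ∀ (xh : EuclideanSpace ℝ (Fin n)) (yh : EuclideanSpace ℝ (Fin p))
        (uh : EuclideanSpace ℝ (Fin n)),
      (∃ φ : ℕ → ℕ, StrictMono φ ∧
          Tendsto (fun j => (x (φ j), y (φ j), u (φ j))) atTop (𝓝 (xh, yh, uh))) →
      varthetaF S g h f K δ xh uh = ((θbar : ℝ) : EReal) := by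
  rintro xh yh uh ⟨φ, hφ, hlim⟩
  obtain ⟨O, -, hSO, hgrad, hlip⟩ := hhC1
  have hx : Tendsto (fun j => x (φ j)) atTop (𝓝 xh) := hlim.fst_nhds
  have hxhS : xh ∈ S := hScomp.isClosed.mem_of_tendsto hx (.of_forall fun j => (hxS _).1)
  have hfS : ∀ z ∈ S, f (K z) ≠ ⊤ := fun z hz => interior_subset (hKS z hz)
  have hθF : ∀ k, θ k * (f (K (x k))).toReal
      = (g (x k)).toReal + h (x k) + (2 * δ)⁻¹ * ‖x k - u k‖ ^ 2 := fun k =>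
    (coe_eq_varthetaF_iff (hxS k).1 (hxS k).2 (hgP.1 _) (hfS _ (hxS k).1)
      (hfpos _ (hxS k).1)).1 (hθ k)
  have hF : Tendsto (fun j => (f (K (x (φ j)))).toReal) atTop (𝓝 (f (K xh)).toReal) :=
    ((hfconv.continuousOn_toReal hfP.1).continuousAt
      (isOpen_interior.mem_nhds (hKS xh hxhS))).tendsto.comp
      ((K.continuous_of_finiteDimensional.tendsto xh).comp hx)
  have hG : Tendsto (fun j => (g (x (φ j))).toReal) atTop
      (𝓝 (θbar * (f (K xh)).toReal - h xh - (2 * δ)⁻¹ * ‖xh - uh‖ ^ 2)) := by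
    refine ((((hθlim.comp hφ.tendsto_atTop).mul hF).sub
      ((hgrad xh (hSO hxhS)).continuousAt.tendsto.comp hx)).sub
      (((hx.sub hlim.snd_nhds.snd_nhds).norm.pow 2).const_mul (2 * δ)⁻¹)).congr fun j => ?_
    simp only [Function.comp_apply, hθF]
    ring
  have hgxh := fpsa_g_eq_of_tendsto hScomp hglsc hgP.1
    (fun z hz w hw => hlip z (hSO hz) w (hSO hw)) (abs_sub_lt_iff.2 ⟨by linarith, by linarith⟩)
    hxS hxmin hu (hθlim.norm.bddAbove_range.imp fun T hT k => hT ⟨k, rfl⟩) hφ hx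
    hlim.snd_nhds.fst_nhds hG
  refine ((coe_eq_varthetaF_iff hxhS (hgxh ▸ EReal.coe_ne_top _) (hgP.1 _) (hfS _ hxhS)
    (hfpos _ hxhS)).2 ?_).symm
  rw [hgxh, EReal.toReal_coe]
  ring

theorem stmt7 {n p : ℕ}
    (S : Set (EuclideanSpace ℝ (Fin n)))
    (g : EuclideanSpace ℝ (Fin n) → EReal)
    (h : EuclideanSpace ℝ (Fin n) → ℝ)
    (gh : EuclideanSpace ℝ (Fin n) → EuclideanSpace ℝ (Fin n))
    (f : EuclideanSpace ℝ (Fin p) → EReal)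
    (K : EuclideanSpace ℝ (Fin n) →ₗ[ℝ] EuclideanSpace ℝ (Fin p))
    (L δ : ℝ)
    (hS : S.Nonempty) (hSconv : Convex ℝ S) (hScomp : IsCompact S)
    (hgP : ERealProper g) (hgconv : ERealConvex g) (hglsc : LowerSemicontinuous g)
    (hfP : ERealProper f) (hfconv : ERealConvex f) (hflsc : LowerSemicontinuous f)
    (hL : 0 < L)
    (hhC1 : ∃ O : Set (EuclideanSpace ℝ (Fin n)), IsOpen O ∧ S ⊆ O ∧
      (∀ z ∈ O, HasGradientAt h (gh z) z) ∧
      (∀ z ∈ O, ∀ w ∈ O, ‖gh z - gh w‖ ≤ L * ‖z - w‖))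
    (hKS : ∀ z ∈ S, K z ∈ interior (edom f))
    (hfpos : ∀ z ∈ S, (0 : EReal) < f (K z))
    (hghnn : ∀ z ∈ S, (0 : EReal) ≤ g z + ((h z : ℝ) : EReal))
    (hSg : ∃ z ∈ S, g z ≠ ⊤)
    (hδ : 0 < δ) (hδL : δ < 1 / L)
    (σ : ℝ) (hσ : 0 < σ) (hσ2 : σ < 2)
    (x u : ℕ → EuclideanSpace ℝ (Fin n)) (y : ℕ → EuclideanSpace ℝ (Fin p)) (θ : ℕ → ℝ)
    (hxS : ∀ k, x k ∈ S ∧ g (x k) ≠ ⊤)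
    (hy : ∀ k, y (k+1) ∈ csubdiff f (K (x k)))
    (hxmin : ∀ k, ∀ w ∈ S,
      g (x (k+1)) + (((2*δ)⁻¹ * ‖x (k+1) - u k + δ • gh (x k)
          - (θ k * δ) • (LinearMap.adjoint K) (y (k+1))‖ ^ 2 : ℝ) : EReal)
        ≤ g w + (((2*δ)⁻¹ * ‖w - u k + δ • gh (x k)
          - (θ k * δ) • (LinearMap.adjoint K) (y (k+1))‖ ^ 2 : ℝ) : EReal))
    (hu : ∀ k, u (k+1) = (1 - σ) • u k + σ • x (k+1))
    (hθ : ∀ k, (θ k : EReal) = varthetaF S g h f K δ (x k) (u k))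
    (hθnn : ∀ k, 0 ≤ θ k)
    (m M : ℝ) (hm : 0 < m)
    (hmM : ∀ k, (m : EReal) ≤ f (K (x k)) ∧ f (K (x k)) ≤ (M : EReal))
    (θbar : ℝ) (hθlim : Tendsto θ atTop (𝓝 θbar))
    :
    ∀ (xh : EuclideanSpace ℝ (Fin n)) (yh : EuclideanSpace ℝ (Fin p))
        (uh : EuclideanSpace ℝ (Fin n)),
      (∃ φ : ℕ → ℕ, StrictMono φ ∧
          Tendsto (fun j => (x (φ j), y (φ j), u (φ j))) atTop (𝓝 (xh, yh, uh))) →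
      varthetaF S g h f K δ xh uh = ((θbar : ℝ) : EReal) :=
  stmt7_general S g h gh f K L δ hScomp hgP hglsc hfP hfconv hhC1 hKS hfpos σ hσ hσ2 x u y θ hxS
    hxmin hu hθ θbar hθlim
end
end
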